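/- Let p ≥ 3 be a real number, μ a probability measure on S, f : S → ℝ measurable with f ≥ 1 and ∫ f dμ ≤ p+1. Suppose S = A ⊔ B with μ(A) = μ(B) = 1/2; on A, f(s) ∈ {1} or f(s) ≥ p^2 (with f(s) = p excluded); on B, f(s) = p or f(s) ≥ p^3. Let x0 = μ({s ∈ A : f(s) = 1}) and x1 = μ({s ∈ B : f(s) = p}). Then x0 + x1 ≥ (2p - 3)/(2p - 2). -/

import Mathlib

open MeasureTheory

lemma mul_measureReal_add_mul_le_setIntegral {α : Type*} [MeasurableSpace α] {μ : Measure α}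
    [IsFiniteMeasure μ] {f : α → ℝ} (hf : Measurable f) (hfi : Integrable f μ) {s : Set α}
    (hs : MeasurableSet s) {c b : ℝ} (hfs : ∀ x ∈ s, f x = c ∨ b ≤ f x) :
    c * μ.real {x ∈ s | f x = c} + b * (μ.real s - μ.real {x ∈ s | f x = c}) ≤
      ∫ x in s, f x ∂μ := by
  have ht : MeasurableSet (f ⁻¹' {c}) := hf (measurableSet_singleton c)
  change c * μ.real (s ∩ f ⁻¹' {c}) + b * (μ.real s - μ.real (s ∩ f ⁻¹' {c})) ≤ _
  rw [← measureReal_inter_add_sdiff (s := s) ht, add_sub_cancel_left,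
    ← integral_inter_add_sdiff ht hfi.integrableOn]
  exact add_le_add
    (setIntegral_ge_of_const_le_real (hs.inter ht) (by finiteness)
      (fun x hx => le_of_eq hx.2.symm) hfi.integrableOn)
    (setIntegral_ge_of_const_le_real (hs.diff ht) (by finiteness)
      (fun x hx => (hfs x hx.1).resolve_left hx.2) hfi.integrableOn)

/-- Writing `y₀ = 1/2 - x₀` and `y₁ = 1/2 - x₁`, the hypothesis says
`(p + 1) ((p - 1) y₀ + p (p - 1) y₁) ≤ (p + 1) / 2`; as `y₁ ≥ 0` this bounds `y₀ + y₁`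
by `1 / (2p - 2)`. -/
lemma div_le_add_of_average_le {p x₀ x₁ : ℝ} (hp : 1 < p) (hx₁ : x₁ ≤ 1 / 2)
    (h : x₀ + p ^ 2 * (1 / 2 - x₀) + p * x₁ + p ^ 3 * (1 / 2 - x₁) ≤ p + 1) :
    (2 * p - 3) / (2 * p - 2) ≤ x₀ + x₁ := by
  have hweighted : (p - 1) * (1 / 2 - x₀) + p * (p - 1) * (1 / 2 - x₁) ≤ 1 / 2 := by
    refine le_of_mul_le_mul_left ?_ (by linarith : (0 : ℝ) < p + 1)
    linarith
  have hsum : (p - 1) * (1 - x₀ - x₁) ≤ 1 / 2 := by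
    nlinarith [mul_nonneg (sq_nonneg (p - 1)) (sub_nonneg.mpr hx₁)]
  rw [div_le_iff₀ (by linarith)]
  linarith

theorem stmt4_general {S : Type*} [MeasurableSpace S] (μ : Measure S) [IsProbabilityMeasure μ]
    (p : ℝ) (hp : 3 ≤ p)
    (f : S → ℝ) (hf : Measurable f) (hfi : Integrable f μ)
    (havg : ∫ s, f s ∂μ ≤ p + 1)
    (A B : Set S) (hA : MeasurableSet A) (hB : MeasurableSet B)
    (hdisj : Disjoint A B) (hcover : A ∪ B = Set.univ)
    (hμA : μ A = 1/2) (hμB : μ B = 1/2)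
    (hfA : ∀ s ∈ A, f s = 1 ∨ p ^ 2 ≤ f s)
    (hfB : ∀ s ∈ B, f s = p ∨ p ^ 3 ≤ f s) :
    ENNReal.ofReal ((2 * p - 3) / (2 * p - 2)) ≤
      μ {s ∈ A | f s = 1} + μ {s ∈ B | f s = p} := by
  have hsplit : ∫ s, f s ∂μ = (∫ s in A, f s ∂μ) + ∫ s in B, f s ∂μ := by
    rw [← setIntegral_union hdisj hB hfi.integrableOn hfi.integrableOn, hcover, setIntegral_univ]
  have hμA' : μ.real A = 1 / 2 := by simp [measureReal_def, hμA]
  have hμB' : μ.real B = 1 / 2 := by simp [measureReal_def, hμB]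
  have hintA := mul_measureReal_add_mul_le_setIntegral hf hfi hA hfA
  have hintB := mul_measureReal_add_mul_le_setIntegral hf hfi hB hfB
  rw [hμA'] at hintA
  rw [hμB'] at hintB
  have hx₁ : μ.real {s ∈ B | f s = p} ≤ 1 / 2 :=
    hμB' ▸ measureReal_mono (Set.sep_subset _ _)
  have hreal : (2 * p - 3) / (2 * p - 2) ≤
      μ.real {s ∈ A | f s = 1} + μ.real {s ∈ B | f s = p} :=
    div_le_add_of_average_le (by linarith) hx₁ (by linarith)
  refine (ENNReal.ofReal_le_ofReal hreal).trans_eq ?_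
  rw [ENNReal.ofReal_add measureReal_nonneg measureReal_nonneg, ofReal_measureReal,
    ofReal_measureReal]

/-- With equidistributed parities: half the family (set `A`) has Selmer order 1 or at
least `p^2`, half (set `B`) has Selmer order `p` or at least `p^3`, and the average
order is at most `p + 1`. Then the combined density of order 1 in `A` and order `p` in
`B` is at least `(2p - 3)/(2p - 2)`. -/
theorem stmt4 {S : Type*} [MeasurableSpace S] (μ : Measure S) [IsProbabilityMeasure μ]
    (p : ℝ) (hp : 3 ≤ p)
    (f : S → ℝ) (hf : Measurable f) (hfi : Integrable f μ)
    (hf1 : ∀ s, 1 ≤ f s)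
    (havg : ∫ s, f s ∂μ ≤ p + 1)
    (A B : Set S) (hA : MeasurableSet A) (hB : MeasurableSet B)
    (hdisj : Disjoint A B) (hcover : A ∪ B = Set.univ)
    (hμA : μ A = 1/2) (hμB : μ B = 1/2)
    (hfA : ∀ s ∈ A, f s = 1 ∨ p ^ 2 ≤ f s)
    (hfB : ∀ s ∈ B, f s = p ∨ p ^ 3 ≤ f s) :
    ENNReal.ofReal ((2 * p - 3) / (2 * p - 2)) ≤
      μ {s ∈ A | f s = 1} + μ {s ∈ B | f s = p} :=
  stmt4_general μ p hp f hf hfi havg A B hA hB hdisj hcover hμA hμB hfA hfB
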